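/- arXiv:1608.04850 — 5 statements merged into one kernel-verified Lean document; each statement's English description precedes it below -/
import Mathlib

section
/- For any real numbers s and f with |f| ≤ F, and positive constants ρ₁, ρ₂, m, the quantity (1/m)·(s·f + s·u) with u = -(F + ρ₁/√2)·sign(s) - ρ₂·s satisfies (1/m)·(s·f + s·u) ≤ -(ρ₁/m)·(|s|/√2) - (2ρ₂/m)·(s²/2). -/
/-! With `s · sign s = |s|` and `s f ≤ |s| F`, the switching term of `u` cancels the worst case of
the disturbance and leaves exactly `-(ρ₁/√2)|s| - ρ₂ s²`; dividing by `m > 0` gives the bound. -/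

open Real

theorem Real.mul_sign_self (r : ℝ) : r * Real.sign r = |r| := by
  rcases lt_trichotomy r 0 with h | rfl | h
  · rw [Real.sign_of_neg h, abs_of_neg h, mul_neg_one]
  · simp
  · rw [Real.sign_of_pos h, abs_of_pos h, mul_one]

theorem mul_le_abs_mul_of_abs_le {s f F : ℝ} (hf : |f| ≤ F) : s * f ≤ |s| * F :=
  calc s * f ≤ |s * f| := le_abs_self _
    _ = |s| * |f| := abs_mul s f
    _ ≤ |s| * F := mul_le_mul_of_nonneg_left hf (abs_nonneg s)

theorem mul_add_mul_sliding_control_le {s f F : ℝ} (hf : |f| ≤ F) (k c : ℝ) :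
    s * f + s * (-(F + k) * Real.sign s - c * s) ≤ -k * |s| - c * s ^ 2 := by
  have hsu : s * (-(F + k) * Real.sign s - c * s) = -(F + k) * |s| - c * s ^ 2 := by
    rw [← Real.mul_sign_self]; ring
  rw [hsu]
  linarith [mul_le_abs_mul_of_abs_le (s := s) hf]

theorem stmt_2_general (s f F ρ₁ ρ₂ m : ℝ) (hf : |f| ≤ F) (hm : 0 < m) :
    (1 / m) * (s * f + s * (-(F + ρ₁ / Real.sqrt 2) * Real.sign s - ρ₂ * s)) ≤
      -(ρ₁ / m) * (|s| / Real.sqrt 2) - (2 * ρ₂ / m) * (s ^ 2 / 2) :=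
  calc (1 / m) * (s * f + s * (-(F + ρ₁ / Real.sqrt 2) * Real.sign s - ρ₂ * s))
      ≤ (1 / m) * (-(ρ₁ / Real.sqrt 2) * |s| - ρ₂ * s ^ 2) :=
        mul_le_mul_of_nonneg_left (mul_add_mul_sliding_control_le hf _ _) (by positivity)
    _ = -(ρ₁ / m) * (|s| / Real.sqrt 2) - (2 * ρ₂ / m) * (s ^ 2 / 2) := by ring

theorem stmt_2 (s f F ρ₁ ρ₂ m : ℝ) (hf : |f| ≤ F) (hρ₁ : 0 < ρ₁) (hρ₂ : 0 < ρ₂) (hm : 0 < m) :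
    (1 / m) * (s * f + s * (-(F + ρ₁ / Real.sqrt 2) * Real.sign s - ρ₂ * s)) ≤
      -(ρ₁ / m) * (|s| / Real.sqrt 2) - (2 * ρ₂ / m) * (s ^ 2 / 2) :=
  stmt_2_general s f F ρ₁ ρ₂ m hf hm
end

section
/- Let c > 0, α ∈ (0,1), k, m > 0, and suppose z(·,t) is the infinite state of the frequency distributed model with input x₃(t), i.e. ∂z/∂t = -ωz + x₃. Let the states satisfy ẋ₁ = x₃, ẋ₃ = -(k/m)x₁ - (c/m)x₂ and x₂ = ∫₀^∞ μ_{1-α}(ω)z(ω,t)dω. Define V₁(t) = (k/2)x₁² + (c/2)∫₀^∞ μ_{1-α}(ω)z²(ω,t)dω + (m/2)x₃². Then V̇₁(t) = -c·∫₀^∞ ω·μ_{1-α}(ω)·z²(ω,t)dω ≤ 0. -/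
open Real MeasureTheory Set

theorem stmt_6 (k c m α : ℝ) (hk : 0 < k) (hc : 0 < c) (hm : 0 < m)
    (hα : α ∈ Set.Ioo (0:ℝ) 1)
    (x₁ x₂ x₃ : ℝ → ℝ) (z : ℝ → ℝ → ℝ) (t : ℝ)
    (hzode : ∀ ω, 0 < ω → HasDerivAt (z ω) (-ω * z ω t + x₃ t) t)
    (hx₂ : x₂ t = ∫ ω in Set.Ioi (0:ℝ),
      (Real.sin ((1 - α) * π) / π) * ω ^ (α - 1) * z ω t)
    (hx₁ : HasDerivAt x₁ (x₃ t) t)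
    (hx₃ : HasDerivAt x₃ (-(k / m) * x₁ t - (c / m) * x₂ t) t)
    -- differentiation under the integral sign for the diffusive energy term
    (hswap : HasDerivAt
      (fun τ => ∫ ω in Set.Ioi (0:ℝ),
        (Real.sin ((1 - α) * π) / π) * ω ^ (α - 1) * (z ω τ) ^ 2)
      (∫ ω in Set.Ioi (0:ℝ),
        (Real.sin ((1 - α) * π) / π) * ω ^ (α - 1) *
          (2 * z ω t * (-ω * z ω t + x₃ t))) t)
    (hint : Integrable (fun ω => ω * ((Real.sin ((1 - α) * π) / π) * ω ^ (α - 1)) * (z ω t) ^ 2)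
      (volume.restrict (Set.Ioi (0:ℝ))))
    (hint2 : Integrable (fun ω => (Real.sin ((1 - α) * π) / π) * ω ^ (α - 1) * z ω t)
      (volume.restrict (Set.Ioi (0:ℝ)))) :
    HasDerivAt
      (fun τ => (k / 2) * (x₁ τ) ^ 2 +
        (c / 2) * (∫ ω in Set.Ioi (0:ℝ),
          (Real.sin ((1 - α) * π) / π) * ω ^ (α - 1) * (z ω τ) ^ 2) +
        (m / 2) * (x₃ τ) ^ 2)
      (-c * ∫ ω in Set.Ioi (0:ℝ),
        ω * ((Real.sin ((1 - α) * π) / π) * ω ^ (α - 1)) * (z ω t) ^ 2) t ∧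
    (-c * ∫ ω in Set.Ioi (0:ℝ),
      ω * ((Real.sin ((1 - α) * π) / π) * ω ^ (α - 1)) * (z ω t) ^ 2) ≤ 0 := by
  set μ : ℝ → ℝ := fun ω => (Real.sin ((1 - α) * π) / π) * ω ^ (α - 1) with hμ
  set A : ℝ := ∫ ω in Set.Ioi (0:ℝ), ω * (μ ω) * (z ω t) ^ 2 with hA
  set B : ℝ := ∫ ω in Set.Ioi (0:ℝ), μ ω * z ω t with hB
  have hkey : (∫ ω in Set.Ioi (0:ℝ), μ ω * (2 * z ω t * (-ω * z ω t + x₃ t)))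
      = (-2) * A + (2 * x₃ t) * B := by
    have heq : ∀ ω : ℝ, μ ω * (2 * z ω t * (-ω * z ω t + x₃ t))
        = (-2) * (ω * (μ ω) * (z ω t) ^ 2) + (2 * x₃ t) * (μ ω * z ω t) := by
      intro ω; ring
    calc (∫ ω in Set.Ioi (0:ℝ), μ ω * (2 * z ω t * (-ω * z ω t + x₃ t)))
        = ∫ ω in Set.Ioi (0:ℝ), ((-2) * (ω * (μ ω) * (z ω t) ^ 2) + (2 * x₃ t) * (μ ω * z ω t)) := by
          simp only [heq]
      _ = (-2) * A + (2 * x₃ t) * B := by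
          rw [integral_add (hint.const_mul _) (hint2.const_mul _),
            MeasureTheory.integral_const_mul, MeasureTheory.integral_const_mul]
  have h1 : HasDerivAt (fun τ => (k / 2) * (x₁ τ) ^ 2) (k / 2 * (2 * x₁ t * x₃ t)) t := by
    exact ((hx₁.pow 2).const_mul (k/2)).congr_deriv (by ring)
  have h3 : HasDerivAt (fun τ => (m / 2) * (x₃ τ) ^ 2)
      (m / 2 * (2 * x₃ t * (-(k / m) * x₁ t - (c / m) * x₂ t))) t := by
    exact ((hx₃.pow 2).const_mul (m/2)).congr_deriv (by ring)
  have h2 : HasDerivAt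
      (fun τ => (c / 2) * (∫ ω in Set.Ioi (0:ℝ), μ ω * (z ω τ) ^ 2))
      (c / 2 * ((-2) * A + (2 * x₃ t) * B)) t := by
    have := hswap.const_mul (c/2)
    rw [hkey] at this
    exact this
  have hsum := (h1.add h2).add h3
  have hAnn : 0 ≤ A := by
    apply integral_nonneg_of_ae
    filter_upwards [ae_restrict_mem measurableSet_Ioi] with ω hω
    have hω' : (0:ℝ) < ω := hω
    have hμnn : 0 ≤ μ ω := by
      apply mul_nonneg
      · apply div_nonneg _ (le_of_lt Real.pi_pos)
        apply Real.sin_nonneg_of_nonneg_of_le_pi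
        · have := hα.2; nlinarith [Real.pi_pos]
        · have := hα.1; nlinarith [Real.pi_pos]
      · exact Real.rpow_nonneg hω'.le _
    positivity
  constructor
  · have hderiv : k / 2 * (2 * x₁ t * x₃ t) + c / 2 * ((-2) * A + (2 * x₃ t) * B)
        + m / 2 * (2 * x₃ t * (-(k / m) * x₁ t - (c / m) * x₂ t)) = -c * A := by
      rw [hx₂] at *
      field_simp
      ring
    exact hsum.congr_deriv hderiv
  · nlinarith
end

section
/- Let V₅ = (k/2)x₁² + (1/2)x₃² + (c/2)∫₀^∞ μ_{1-α}(ω)z(ω,t)²dω, where ẋ₃ = -k·x₁ - c·x₂, ẋ₁ = x₃ (in the composed sense), x₂ = ∫₀^∞ μ_{1-α}(ω)z(ω,t)dω, and ∂z/∂t = -ωz + x₃. Then V̇₅ = -c∫₀^∞ ω·μ_{1-α}(ω)·z(ω,t)²dω ≤ 0. -/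
/-!
Differentiating `V₅` along the sliding dynamics gives
`k x₁ x₃ + x₃ ẋ₃ + c x₃ x₂ - c ∫ ω μ z² dω = x₃ (ẋ₃ + c x₂ + k x₁) - c ∫ ω μ z² dω`,
where the term `c x₃ x₂` comes from the `x₃` in `∂z/∂t = -ω z + x₃` and the definition of `x₂`.
The sliding dynamics make the bracket vanish, and the remaining integral is nonnegative because
the weight `μ_{1-α}(ω) = sin((1-α)π)/π · ω^(α-1)` is nonnegative for `α ∈ [0, 1]`.
-/

open Real MeasureTheory Set

lemma fractionalWeight_nonneg {α : ℝ} (hα : α ∈ Icc (0 : ℝ) 1) {ω : ℝ} (hω : 0 ≤ ω) :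
    0 ≤ Real.sin ((1 - α) * π) / π * ω ^ (α - 1) := by
  have hsin : 0 ≤ Real.sin ((1 - α) * π) :=
    Real.sin_nonneg_of_nonneg_of_le_pi (by nlinarith [hα.2, pi_pos]) (by nlinarith [hα.1, pi_pos])
  positivity

lemma integral_diffusive_energy_rate_eq {ν : Measure ℝ} {μ z : ℝ → ℝ} {u : ℝ}
    (hdiss : Integrable (fun ω => ω * μ ω * z ω ^ 2) ν) (hx : Integrable (fun ω => μ ω * z ω) ν) :
    ∫ ω, μ ω * (2 * z ω * (-ω * z ω + u)) ∂ν
      = -2 * ∫ ω, ω * μ ω * z ω ^ 2 ∂ν + 2 * u * ∫ ω, μ ω * z ω ∂ν := by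
  rw [← integral_const_mul, ← integral_const_mul,
    ← integral_add (hdiss.const_mul _) (hx.const_mul _)]
  congr 1 with ω
  ring

lemma hasDerivAt_lyapunov_of_sliding {k c t x₂ D : ℝ} {x₁ x₃ W : ℝ → ℝ}
    (hx₁ : HasDerivAt x₁ (x₃ t) t) (hx₃ : HasDerivAt x₃ (-k * x₁ t - c * x₂) t)
    (hW : HasDerivAt W (-2 * D + 2 * x₃ t * x₂) t) :
    HasDerivAt (fun τ => k / 2 * x₁ τ ^ 2 + 1 / 2 * x₃ τ ^ 2 + c / 2 * W τ) (-c * D) t := by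
  refine ((((hx₁.pow 2).const_mul (k / 2)).add ((hx₃.pow 2).const_mul (1 / 2))).add
    (hW.const_mul (c / 2))).congr_deriv ?_
  -- the cross terms are `x₃ (ẋ₃ + c x₂ + k x₁) = 0`
  push_cast
  ring

theorem stmt_12_general (k c α : ℝ) (hc : 0 < c) (hα : α ∈ Set.Ioo (0:ℝ) 1)
    (x₁ x₂ x₃ : ℝ → ℝ) (z : ℝ → ℝ → ℝ) (t : ℝ)
    (hx₂ : x₂ t = ∫ ω in Set.Ioi (0:ℝ),
      (Real.sin ((1 - α) * π) / π) * ω ^ (α - 1) * z ω t)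
    (hx₁ : HasDerivAt x₁ (x₃ t) t)
    (hx₃ : HasDerivAt x₃ (-k * x₁ t - c * x₂ t) t)
    (hswap : HasDerivAt
      (fun τ => ∫ ω in Set.Ioi (0:ℝ),
        (Real.sin ((1 - α) * π) / π) * ω ^ (α - 1) * (z ω τ) ^ 2)
      (∫ ω in Set.Ioi (0:ℝ),
        (Real.sin ((1 - α) * π) / π) * ω ^ (α - 1) *
          (2 * z ω t * (-ω * z ω t + x₃ t))) t)
    (hint : Integrable (fun ω => ω * ((Real.sin ((1 - α) * π) / π) * ω ^ (α - 1)) * (z ω t) ^ 2)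
      (volume.restrict (Set.Ioi (0:ℝ))))
    (hint2 : Integrable (fun ω => (Real.sin ((1 - α) * π) / π) * ω ^ (α - 1) * z ω t)
      (volume.restrict (Set.Ioi (0:ℝ)))) :
    HasDerivAt
      (fun τ => (k / 2) * (x₁ τ) ^ 2 + (1 / 2) * (x₃ τ) ^ 2 +
        (c / 2) * (∫ ω in Set.Ioi (0:ℝ),
          (Real.sin ((1 - α) * π) / π) * ω ^ (α - 1) * (z ω τ) ^ 2))
      (-c * ∫ ω in Set.Ioi (0:ℝ),
        ω * ((Real.sin ((1 - α) * π) / π) * ω ^ (α - 1)) * (z ω t) ^ 2) t ∧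
    (-c * ∫ ω in Set.Ioi (0:ℝ),
      ω * ((Real.sin ((1 - α) * π) / π) * ω ^ (α - 1)) * (z ω t) ^ 2) ≤ 0 := by
  set μ : ℝ → ℝ := fun ω => Real.sin ((1 - α) * π) / π * ω ^ (α - 1)
  refine ⟨?_, ?_⟩
  · rw [integral_diffusive_energy_rate_eq (μ := μ) hint hint2, ← hx₂] at hswap
    exact hasDerivAt_lyapunov_of_sliding hx₁ hx₃ hswap
  · have hdiss : 0 ≤ ∫ ω in Ioi (0 : ℝ), ω * μ ω * z ω t ^ 2 :=
      setIntegral_nonneg measurableSet_Ioi fun ω (hω : 0 < ω) =>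
        mul_nonneg (mul_nonneg hω.le (fractionalWeight_nonneg (Ioo_subset_Icc_self hα) hω.le))
          (sq_nonneg _)
    nlinarith

theorem stmt_12 (k c α : ℝ) (hk : 0 < k) (hc : 0 < c) (hα : α ∈ Set.Ioo (0:ℝ) 1)
    (x₁ x₂ x₃ : ℝ → ℝ) (z : ℝ → ℝ → ℝ) (t : ℝ)
    (hzode : ∀ ω, 0 < ω → HasDerivAt (z ω) (-ω * z ω t + x₃ t) t)
    (hx₂ : x₂ t = ∫ ω in Set.Ioi (0:ℝ),
      (Real.sin ((1 - α) * π) / π) * ω ^ (α - 1) * z ω t)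
    (hx₁ : HasDerivAt x₁ (x₃ t) t)
    (hx₃ : HasDerivAt x₃ (-k * x₁ t - c * x₂ t) t)
    (hswap : HasDerivAt
      (fun τ => ∫ ω in Set.Ioi (0:ℝ),
        (Real.sin ((1 - α) * π) / π) * ω ^ (α - 1) * (z ω τ) ^ 2)
      (∫ ω in Set.Ioi (0:ℝ),
        (Real.sin ((1 - α) * π) / π) * ω ^ (α - 1) *
          (2 * z ω t * (-ω * z ω t + x₃ t))) t)
    (hint : Integrable (fun ω => ω * ((Real.sin ((1 - α) * π) / π) * ω ^ (α - 1)) * (z ω t) ^ 2)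
      (volume.restrict (Set.Ioi (0:ℝ))))
    (hint2 : Integrable (fun ω => (Real.sin ((1 - α) * π) / π) * ω ^ (α - 1) * z ω t)
      (volume.restrict (Set.Ioi (0:ℝ)))) :
    HasDerivAt
      (fun τ => (k / 2) * (x₁ τ) ^ 2 + (1 / 2) * (x₃ τ) ^ 2 +
        (c / 2) * (∫ ω in Set.Ioi (0:ℝ),
          (Real.sin ((1 - α) * π) / π) * ω ^ (α - 1) * (z ω τ) ^ 2))
      (-c * ∫ ω in Set.Ioi (0:ℝ),
        ω * ((Real.sin ((1 - α) * π) / π) * ω ^ (α - 1)) * (z ω t) ^ 2) t ∧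
    (-c * ∫ ω in Set.Ioi (0:ℝ),
      ω * ((Real.sin ((1 - α) * π) / π) * ω ^ (α - 1)) * (z ω t) ^ 2) ≤ 0 :=
  stmt_12_general k c α hc hα x₁ x₂ x₃ z t hx₂ hx₁ hx₃ hswap hint hint2
end

section
/- Let k, c, m > 0, α ∈ (0,1), and consider the sliding-mode dynamics on the energy space: x₁, x₃ real-valued, z(·,t) in the weighted L² space with weight μ_{1-α}, satisfying ẋ₁-compatible relations, ∂z/∂t = -ωz + x₃, x₂ = ∫μ_{1-α}z dω, m·ẋ₃ = -k·x₁ - c·x₂. Then the energy E(t) = (k/2)x₁² + (c/2)∫μ_{1-α}(ω)z²dω + (m/2)x₃² is nonincreasing in t. -/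
open Real MeasureTheory Set

/-!
Along the sliding dynamics the derivative of the energy is `-c ∫ ω μ_{1-α}(ω) z(ω)² dω`: the
cross terms `k x₁ x₃` and `-(k x₁ + c x₂) x₃` cancel against the `x₃`-part of the damping term
because `x₂ = ∫ μ_{1-α} z`. The weight is nonnegative for `α ∈ [0, 1]`, so the energy decreases.
-/

/-- The weight `μ_{1-α}(ω)` of the diffusive representation of the fractional derivative. -/
noncomputable def fracWeight (α ω : ℝ) : ℝ := sin ((1 - α) * π) / π * ω ^ (α - 1)

lemma fracWeight_nonneg {α ω : ℝ} (hα₀ : 0 ≤ α) (hα₁ : α ≤ 1) (hω : 0 ≤ ω) :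
    0 ≤ fracWeight α ω := by
  have hsin : 0 ≤ sin ((1 - α) * π) :=
    sin_nonneg_of_nonneg_of_le_pi (by nlinarith [pi_pos]) (by nlinarith [pi_pos])
  unfold fracWeight
  have := rpow_nonneg hω (α - 1)
  positivity

section Dissipation

variable {w : ℝ → ℝ} {z : ℝ → ℝ}

lemma setIntegral_weight_mul_deriv_sq_relaxation (v : ℝ)
    (hdiss : Integrable (fun ω => ω * w ω * z ω ^ 2) (volume.restrict (Ioi 0)))
    (hmass : Integrable (fun ω => w ω * z ω) (volume.restrict (Ioi 0))) :
    ∫ ω in Ioi 0, w ω * (2 * z ω * (-ω * z ω + v)) =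
      -2 * (∫ ω in Ioi 0, ω * w ω * z ω ^ 2) + 2 * v * ∫ ω in Ioi 0, w ω * z ω := by
  have hsum := integral_add (hdiss.const_mul (-2)) (hmass.const_mul (2 * v))
  rw [integral_const_mul, integral_const_mul] at hsum
  rw [← hsum]
  congr 1 with ω
  ring

lemma setIntegral_dissipation_nonneg (hw : ∀ ω ∈ Ioi (0 : ℝ), 0 ≤ w ω) :
    0 ≤ ∫ ω in Ioi 0, ω * w ω * z ω ^ 2 :=
  setIntegral_nonneg measurableSet_Ioi fun ω hω =>
    mul_nonneg (mul_nonneg hω.le (hw ω hω)) (sq_nonneg _)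

end Dissipation

lemma hasDerivAt_energy {k c m : ℝ} (hm : m ≠ 0) {w : ℝ → ℝ} {x₁ x₂ x₃ : ℝ → ℝ}
    {z : ℝ → ℝ → ℝ} {t : ℝ}
    (hx₂ : x₂ t = ∫ ω in Ioi 0, w ω * z ω t)
    (hx₁ : HasDerivAt x₁ (x₃ t) t)
    (hx₃ : HasDerivAt x₃ ((-k * x₁ t - c * x₂ t) / m) t)
    (hswap : HasDerivAt (fun τ => ∫ ω in Ioi 0, w ω * z ω τ ^ 2)
      (∫ ω in Ioi 0, w ω * (2 * z ω t * (-ω * z ω t + x₃ t))) t)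
    (hdiss : Integrable (fun ω => ω * w ω * z ω t ^ 2) (volume.restrict (Ioi 0)))
    (hmass : Integrable (fun ω => w ω * z ω t) (volume.restrict (Ioi 0))) :
    HasDerivAt
      (fun τ => k / 2 * x₁ τ ^ 2 + c / 2 * (∫ ω in Ioi 0, w ω * z ω τ ^ 2) + m / 2 * x₃ τ ^ 2)
      (-c * ∫ ω in Ioi 0, ω * w ω * z ω t ^ 2) t := by
  have h₁ : HasDerivAt (fun τ => x₁ τ ^ 2) (2 * x₁ t * x₃ t) t := by
    simpa using hx₁.fun_pow 2
  have h₃ : HasDerivAt (fun τ => x₃ τ ^ 2) (2 * x₃ t * ((-k * x₁ t - c * x₂ t) / m)) t := by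
    simpa using hx₃.fun_pow 2
  refine (((h₁.const_mul (k / 2)).add (hswap.const_mul (c / 2))).add
    (h₃.const_mul (m / 2))).congr_deriv ?_
  rw [setIntegral_weight_mul_deriv_sq_relaxation _ hdiss hmass, ← hx₂]
  generalize ∫ ω in Ioi 0, ω * w ω * z ω t ^ 2 = D
  field_simp
  ring

theorem stmt_18_general (k c m α : ℝ) (hc : 0 < c) (hm : 0 < m)
    (hα : α ∈ Set.Ioo (0:ℝ) 1)
    (x₁ x₂ x₃ : ℝ → ℝ) (z : ℝ → ℝ → ℝ)
    (hx₂ : ∀ t, x₂ t = ∫ ω in Set.Ioi (0:ℝ),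
      (Real.sin ((1 - α) * π) / π) * ω ^ (α - 1) * z ω t)
    (hx₁ : ∀ t, HasDerivAt x₁ (x₃ t) t)
    (hx₃ : ∀ t, HasDerivAt x₃ ((-k * x₁ t - c * x₂ t) / m) t)
    (hswap : ∀ t, HasDerivAt
      (fun τ => ∫ ω in Set.Ioi (0:ℝ),
        (Real.sin ((1 - α) * π) / π) * ω ^ (α - 1) * (z ω τ) ^ 2)
      (∫ ω in Set.Ioi (0:ℝ),
        (Real.sin ((1 - α) * π) / π) * ω ^ (α - 1) *
          (2 * z ω t * (-ω * z ω t + x₃ t))) t)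
    (hint : ∀ t, Integrable
      (fun ω => ω * ((Real.sin ((1 - α) * π) / π) * ω ^ (α - 1)) * (z ω t) ^ 2)
      (volume.restrict (Set.Ioi (0:ℝ))))
    (hint2 : ∀ t, Integrable (fun ω => (Real.sin ((1 - α) * π) / π) * ω ^ (α - 1) * z ω t)
      (volume.restrict (Set.Ioi (0:ℝ)))) :
    AntitoneOn
      (fun t => (k / 2) * (x₁ t) ^ 2 +
        (c / 2) * (∫ ω in Set.Ioi (0:ℝ),
          (Real.sin ((1 - α) * π) / π) * ω ^ (α - 1) * (z ω t) ^ 2) +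
        (m / 2) * (x₃ t) ^ 2)
      (Set.Ici (0:ℝ)) := by
  have hE := fun t =>
    hasDerivAt_energy (w := fracWeight α) hm.ne' (hx₂ t) (hx₁ t) (hx₃ t) (hswap t) (hint t)
      (hint2 t)
  refine (antitone_of_hasDerivAt_nonpos hE fun t => ?_).antitoneOn _
  have hw : ∀ ω ∈ Ioi (0 : ℝ), 0 ≤ fracWeight α ω := fun ω hω =>
    fracWeight_nonneg hα.1.le hα.2.le hω.le
  exact mul_nonpos_of_nonpos_of_nonneg (neg_nonpos.2 hc.le) (setIntegral_dissipation_nonneg hw)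

theorem stmt_18 (k c m α : ℝ) (hk : 0 < k) (hc : 0 < c) (hm : 0 < m)
    (hα : α ∈ Set.Ioo (0:ℝ) 1)
    (x₁ x₂ x₃ : ℝ → ℝ) (z : ℝ → ℝ → ℝ)
    (hzode : ∀ ω, 0 < ω → ∀ t, HasDerivAt (z ω) (-ω * z ω t + x₃ t) t)
    (hx₂ : ∀ t, x₂ t = ∫ ω in Set.Ioi (0:ℝ),
      (Real.sin ((1 - α) * π) / π) * ω ^ (α - 1) * z ω t)
    (hx₁ : ∀ t, HasDerivAt x₁ (x₃ t) t)
    (hx₃ : ∀ t, HasDerivAt x₃ ((-k * x₁ t - c * x₂ t) / m) t)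
    (hswap : ∀ t, HasDerivAt
      (fun τ => ∫ ω in Set.Ioi (0:ℝ),
        (Real.sin ((1 - α) * π) / π) * ω ^ (α - 1) * (z ω τ) ^ 2)
      (∫ ω in Set.Ioi (0:ℝ),
        (Real.sin ((1 - α) * π) / π) * ω ^ (α - 1) *
          (2 * z ω t * (-ω * z ω t + x₃ t))) t)
    (hint : ∀ t, Integrable
      (fun ω => ω * ((Real.sin ((1 - α) * π) / π) * ω ^ (α - 1)) * (z ω t) ^ 2)
      (volume.restrict (Set.Ioi (0:ℝ))))
    (hint2 : ∀ t, Integrable (fun ω => (Real.sin ((1 - α) * π) / π) * ω ^ (α - 1) * z ω t)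
      (volume.restrict (Set.Ioi (0:ℝ)))) :
    AntitoneOn
      (fun t => (k / 2) * (x₁ t) ^ 2 +
        (c / 2) * (∫ ω in Set.Ioi (0:ℝ),
          (Real.sin ((1 - α) * π) / π) * ω ^ (α - 1) * (z ω t) ^ 2) +
        (m / 2) * (x₃ t) ^ 2)
      (Set.Ici (0:ℝ)) :=
  stmt_18_general k c m α hc hm hα x₁ x₂ x₃ z hx₂ hx₁ hx₃ hswap hint hint2
end

section
/- Let V : [0,∞) → ℝ be nonnegative and differentiable with V'(t) ≤ -a·√(V(t)) for all t, where a > 0. Then V(T) = 0 for all T ≥ 2√(V(0))/a. -/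
/-! Along any stretch where `V > 0`, the chain rule turns `V' ≤ -a √V` into `(√V)' ≤ -a/2`, so
`√V` falls at least linearly with slope `a/2`. As `V` is also nonincreasing, a value `V T > 0`
would keep `V` positive on all of `[0, T]`, and then `√(V T) ≤ √(V 0) - a T / 2 ≤ 0` once
`T ≥ 2 √(V 0) / a`. -/

open Real Set

theorem antitoneOn_Ici_of_deriv_nonpos {V : ℝ → ℝ} {s : ℝ}
    (hdiff : ∀ t, s ≤ t → DifferentiableAt ℝ V t) (hderiv : ∀ t, s < t → deriv V t ≤ 0) :
    AntitoneOn V (Ici s) := by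
  refine antitoneOn_of_deriv_nonpos (convex_Ici s)
    (fun t ht => (hdiff t ht).continuousAt.continuousWithinAt) ?_ ?_
  · rw [interior_Ici]
    exact fun t ht => (hdiff t (le_of_lt ht)).differentiableWithinAt
  · rw [interior_Ici]
    exact hderiv

theorem sqrt_sub_sqrt_le_of_deriv_le_neg_mul_sqrt {V : ℝ → ℝ} {a s t : ℝ} (hst : s ≤ t)
    (hpos : ∀ x ∈ Icc s t, 0 < V x) (hdiff : ∀ x ∈ Icc s t, DifferentiableAt ℝ V x)
    (hderiv : ∀ x ∈ Ioo s t, deriv V x ≤ -a * √(V x)) :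
    √(V t) - √(V s) ≤ -(a / 2) * (t - s) := by
  have hsqrt : ∀ x ∈ Icc s t, HasDerivAt (fun y => √(V y)) (deriv V x / (2 * √(V x))) x :=
    fun x hx => (hdiff x hx).hasDerivAt.sqrt (hpos x hx).ne'
  refine (convex_Icc s t).image_sub_le_mul_sub_of_deriv_le
    (fun x hx => (hsqrt x hx).continuousAt.continuousWithinAt) ?_ ?_
    s (left_mem_Icc.2 hst) t (right_mem_Icc.2 hst) hst
  · rw [interior_Icc]
    exact fun x hx => (hsqrt x (Ioo_subset_Icc_self hx)).differentiableAt.differentiableWithinAt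
  · rw [interior_Icc]
    intro x hx
    have hroot : 0 < √(V x) := sqrt_pos.2 (hpos x (Ioo_subset_Icc_self hx))
    rw [(hsqrt x (Ioo_subset_Icc_self hx)).deriv, div_le_iff₀ (by positivity)]
    linarith [hderiv x hx]

theorem stmt_19 (V : ℝ → ℝ) (a : ℝ) (ha : 0 < a)
    (hV0 : ∀ t, 0 ≤ t → 0 ≤ V t)
    (hdiff : ∀ t, 0 ≤ t → DifferentiableAt ℝ V t)
    (hineq : ∀ t, 0 ≤ t → deriv V t ≤ -a * Real.sqrt (V t)) :
    ∀ T, 2 * Real.sqrt (V 0) / a ≤ T → V T = 0 := by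
  intro T hT
  by_contra hVT
  have hT0 : 0 ≤ T := le_trans (by positivity) hT
  have hanti : AntitoneOn V (Ici 0) := antitoneOn_Ici_of_deriv_nonpos hdiff fun t ht =>
    (hineq t ht.le).trans (mul_nonpos_of_nonpos_of_nonneg (neg_nonpos.2 ha.le) (sqrt_nonneg _))
  have hpos : ∀ t ∈ Icc 0 T, 0 < V t := fun t ht =>
    ((hV0 T hT0).lt_of_ne' hVT).trans_le (hanti ht.1 hT0 ht.2)
  have hdecay := sqrt_sub_sqrt_le_of_deriv_le_neg_mul_sqrt hT0 hpos
    (fun t ht => hdiff t ht.1) (fun t ht => hineq t ht.1.le)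
  have hroot : 0 < √(V T) := sqrt_pos.2 (hpos T (right_mem_Icc.2 hT0))
  have hlong : 2 * √(V 0) ≤ T * a := (div_le_iff₀ ha).1 hT
  linarith
end
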